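/- arXiv:2208.12748 — 8 statements merged into one kernel-verified Lean document; each statement's English description precedes it below -/
import Mathlib

section
/- If an edge e with endpoints in two distinct connected components of G (having cycle ranks i and j respectively) is added to G, then the homotopy polynomial of the resulting graph equals h_G(x) - x^i - x^j + x^{i+j}. -/
open SimpleGraph Polynomial

/-- The vertices of a connected component `c` of `G`. -/
noncomputable def compVerts {V : Type*} [Fintype V] (G : SimpleGraph V)
    (c : G.ConnectedComponent) : Finset V := by
  classical exact Finset.univ.filter fun v => G.connectedComponentMk v = c

/-- The edges of `G` lying in the connected component `c`. -/
noncomputable def compEdges {V : Type*} [Fintype V] (G : SimpleGraph V)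
    (c : G.ConnectedComponent) : Finset (Sym2 V) := by
  classical exact G.edgeFinset.filter fun e => ∀ v ∈ e, G.connectedComponentMk v = c

/-- The cycle rank (number of independent loops) `|E(C)| - |V(C)| + 1` of the
connected component `c` of `G`. -/
noncomputable def compCycleRank {V : Type*} [Fintype V] (G : SimpleGraph V)
    (c : G.ConnectedComponent) : ℕ :=
  (compEdges G c).card + 1 - (compVerts G c).card

/-- The graph homotopy polynomial: the sum over connected components `c`
of `X ^ (cycle rank of c)`. -/
noncomputable def homotopyPoly {V : Type*} [Fintype V] (G : SimpleGraph V) : Polynomial ℤ := by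
  classical exact ∑ c : G.ConnectedComponent, (Polynomial.X : Polynomial ℤ) ^ (compCycleRank G c)

section Aux

variable {V : Type*}

lemma adj_sup_iff (G : SimpleGraph V) {u v : V} (huv : u ≠ v) (a b : V) :
    (G ⊔ SimpleGraph.fromEdgeSet {s(u, v)}).Adj a b ↔
      G.Adj a b ∨ (a = u ∧ b = v) ∨ (a = v ∧ b = u) := by
  simp only [sup_adj, fromEdgeSet_adj, Set.mem_singleton_iff, Sym2.eq_iff]
  constructor
  · rintro (h | ⟨(⟨rfl, rfl⟩ | ⟨rfl, rfl⟩), hne⟩)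
    · exact Or.inl h
    · exact Or.inr (Or.inl ⟨rfl, rfl⟩)
    · exact Or.inr (Or.inr ⟨rfl, rfl⟩)
  · rintro (h | ⟨rfl, rfl⟩ | ⟨rfl, rfl⟩)
    · exact Or.inl h
    · exact Or.inr ⟨Or.inl ⟨rfl, rfl⟩, huv⟩
    · exact Or.inr ⟨Or.inr ⟨rfl, rfl⟩, huv.symm⟩

lemma reach_sup_iff (G : SimpleGraph V) {u v : V} (huv : u ≠ v)
    (hnr : ¬ G.Reachable u v) (a b : V) :
    (G ⊔ SimpleGraph.fromEdgeSet {s(u, v)}).Reachable a b ↔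
      G.Reachable a b ∨ (G.Reachable a u ∧ G.Reachable v b) ∨
        (G.Reachable a v ∧ G.Reachable u b) := by
  constructor
  · intro h
    rw [reachable_iff_reflTransGen] at h
    induction h using Relation.ReflTransGen.head_induction_on with
    | refl => exact Or.inl (Reachable.refl b)
    | head hac hcb ih =>
      rw [adj_sup_iff G huv] at hac
      rcases hac with hac | ⟨rfl, rfl⟩ | ⟨rfl, rfl⟩
      · rcases ih with h | ⟨h1, h2⟩ | ⟨h1, h2⟩
        · exact Or.inl (hac.reachable.trans h)
        · exact Or.inr (Or.inl ⟨hac.reachable.trans h1, h2⟩)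
        · exact Or.inr (Or.inr ⟨hac.reachable.trans h1, h2⟩)
      · rcases ih with h | ⟨h1, h2⟩ | ⟨h1, h2⟩
        · exact Or.inr (Or.inl ⟨Reachable.refl _, h⟩)
        · exact absurd h1.symm hnr
        · exact Or.inl h2
      · rcases ih with h | ⟨h1, h2⟩ | ⟨h1, h2⟩
        · exact Or.inr (Or.inr ⟨Reachable.refl _, h⟩)
        · exact Or.inl h2
        · exact absurd h1 hnr
  · have hmono : ∀ x y : V, G.Reachable x y →
        (G ⊔ SimpleGraph.fromEdgeSet {s(u, v)}).Reachable x y :=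
      fun x y h => h.mono le_sup_left
    have huvr : (G ⊔ SimpleGraph.fromEdgeSet {s(u, v)}).Reachable u v := by
      refine Adj.reachable ?_
      rw [adj_sup_iff G huv]
      exact Or.inr (Or.inl ⟨rfl, rfl⟩)
    rintro (h | ⟨h1, h2⟩ | ⟨h1, h2⟩)
    · exact hmono _ _ h
    · exact ((hmono _ _ h1).trans huvr).trans (hmono _ _ h2)
    · exact ((hmono _ _ h1).trans huvr.symm).trans (hmono _ _ h2)

lemma exists_adj_dist_lt (G : SimpleGraph V) {w r : V}
    (h : G.Reachable w r) (hne : w ≠ r) :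
    ∃ x, G.Adj w x ∧ G.dist x r < G.dist w r := by
  obtain ⟨p, hp⟩ := h.exists_walk_length_eq_dist
  cases p with
  | nil => exact absurd rfl hne
  | cons hadj q =>
    refine ⟨_, hadj, ?_⟩
    have h1 : G.dist _ r ≤ q.length := SimpleGraph.dist_le q
    simp only [SimpleGraph.Walk.length_cons] at hp
    omega

lemma card_verts_le [Fintype V] (G : SimpleGraph V) (c : G.ConnectedComponent) :
    (compVerts G c).card ≤ (compEdges G c).card + 1 := by
  classical
  obtain ⟨r, hr⟩ := c.exists_rep
  have hr' : G.connectedComponentMk r = c := hr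
  have hrmem : r ∈ compVerts G c := by simp [compVerts, hr']
  have key : ∀ w : V, ∃ x, w ∈ (compVerts G c).erase r →
      G.Adj w x ∧ G.dist x r < G.dist w r := by
    intro w
    by_cases hw : w ∈ (compVerts G c).erase r
    · rw [Finset.mem_erase] at hw
      obtain ⟨hne, hwc⟩ := hw
      simp only [compVerts, Finset.mem_filter] at hwc
      have hreach : G.Reachable w r := ConnectedComponent.exact (hwc.2.trans hr'.symm)
      obtain ⟨x, h1, h2⟩ := exists_adj_dist_lt G hreach hne
      exact ⟨x, fun _ => ⟨h1, h2⟩⟩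
    · exact ⟨w, fun h => absurd h hw⟩
  choose f hf using key
  have hinj : Set.InjOn (fun w => s(w, f w)) ((compVerts G c).erase r) := by
    intro a ha b hb hab
    simp only [Sym2.eq_iff] at hab
    rcases hab with ⟨rfl, _⟩ | ⟨h1, h2⟩
    · rfl
    · have da := (hf a ha).2
      have db := (hf b hb).2
      rw [h2] at da
      rw [← h1] at db
      omega
  have hmaps : ∀ w ∈ (compVerts G c).erase r, s(w, f w) ∈ compEdges G c := by
    intro w hw
    have hwc : G.connectedComponentMk w = c := by
      have := Finset.mem_of_mem_erase hw
      simpa [compVerts] using this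
    simp only [compEdges, Finset.mem_filter, mem_edgeFinset]
    refine ⟨(hf w hw).1, ?_⟩
    intro z hz
    rw [Sym2.mem_iff] at hz
    rcases hz with rfl | rfl
    · exact hwc
    · rw [← hwc]
      exact ConnectedComponent.sound (hf w hw).1.reachable.symm
  have := Finset.card_le_card_of_injOn _ hmaps hinj
  have hcard := Finset.card_erase_of_mem hrmem
  have hpos : 0 < (compVerts G c).card := Finset.card_pos.mpr ⟨r, hrmem⟩
  omega

lemma homotopyPoly_eq [Fintype V] (G : SimpleGraph V) [Fintype G.ConnectedComponent] :
    homotopyPoly G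
      = ∑ c : G.ConnectedComponent, (Polynomial.X : Polynomial ℤ) ^ compCycleRank G c := by
  unfold homotopyPoly
  congr!

end Aux

theorem stmt_3 {V : Type*} [Fintype V] (G : SimpleGraph V) (u v : V)
    (huv : u ≠ v) (hadj : ¬ G.Adj u v)
    (hcomp : G.connectedComponentMk u ≠ G.connectedComponentMk v) (i j : ℕ)
    (hi : i = compCycleRank G (G.connectedComponentMk u))
    (hj : j = compCycleRank G (G.connectedComponentMk v)) :
    homotopyPoly (G ⊔ SimpleGraph.fromEdgeSet {s(u, v)}) =
      homotopyPoly G - Polynomial.X ^ i - Polynomial.X ^ j + Polynomial.X ^ (i + j) := by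
  classical
  set G' := G ⊔ SimpleGraph.fromEdgeSet {s(u, v)} with hG'
  set cu := G.connectedComponentMk u with hcu
  set cv := G.connectedComponentMk v with hcv
  let φ : G.ConnectedComponent → G'.ConnectedComponent :=
    ConnectedComponent.map (Hom.ofLE (le_sup_left : G ≤ G'))
  have hφmk : ∀ a : V, φ (G.connectedComponentMk a) = G'.connectedComponentMk a := by
    intro a; simp [φ, ConnectedComponent.map_mk]
  have hnr : ¬ G.Reachable u v := fun h => hcomp (ConnectedComponent.sound h)
  have hreach := reach_sup_iff G huv hnr
  have P1 : ∀ c : G.ConnectedComponent, c ≠ cu → c ≠ cv → ∀ w : V,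
      (G'.connectedComponentMk w = φ c ↔ G.connectedComponentMk w = c) := by
    intro c h1 h2 w
    obtain ⟨a, ha⟩ := c.exists_rep
    have ha' : G.connectedComponentMk a = c := ha
    rw [← ha', hφmk, ConnectedComponent.eq, ConnectedComponent.eq, hreach]
    constructor
    · rintro (h | ⟨hwu, hva⟩ | ⟨hwv, hua⟩)
      · exact h
      · exact absurd (ha' ▸ (ConnectedComponent.sound hva).symm) h2
      · exact absurd (ha' ▸ (ConnectedComponent.sound hua).symm) h1
    · exact Or.inl
  have P2 : ∀ w : V, (G'.connectedComponentMk w = φ cu ↔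
      G.connectedComponentMk w = cu ∨ G.connectedComponentMk w = cv) := by
    intro w
    rw [hcu, hφmk, ConnectedComponent.eq, hreach]
    constructor
    · rintro (h | ⟨hwu, _⟩ | ⟨hwv, _⟩)
      · exact Or.inl (ConnectedComponent.sound h)
      · exact Or.inl (ConnectedComponent.sound hwu)
      · exact Or.inr (ConnectedComponent.sound hwv)
    · rintro (h | h)
      · exact Or.inl (ConnectedComponent.exact h)
      · exact Or.inr (Or.inr ⟨ConnectedComponent.exact h, Reachable.refl u⟩)
  have hedge' : ∀ e : Sym2 V, (e ∈ G'.edgeSet ↔ e ∈ G.edgeSet ∨ e = s(u, v)) := by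
    intro e
    simp only [hG', edgeSet_sup, edgeSet_fromEdgeSet, Set.mem_union,
      Set.mem_diff, Set.mem_singleton_iff, Set.mem_setOf_eq]
    constructor
    · rintro (h | ⟨rfl, -⟩)
      · exact Or.inl h
      · exact Or.inr rfl
    · rintro (h | rfl)
      · exact Or.inl h
      · exact Or.inr ⟨rfl, by simp [Sym2.mk_isDiag_iff, huv]⟩
  have hVc : ∀ c : G.ConnectedComponent, c ≠ cu → c ≠ cv →
      compVerts G' (φ c) = compVerts G c := by
    intro c h1 h2
    ext w
    simp [compVerts, P1 c h1 h2 w]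
  have hVu : compVerts G' (φ cu) = compVerts G cu ∪ compVerts G cv := by
    ext w
    simp [compVerts, P2 w, Finset.mem_union]
  have hEc : ∀ c : G.ConnectedComponent, c ≠ cu → c ≠ cv →
      compEdges G' (φ c) = compEdges G c := by
    intro c h1 h2
    ext e
    induction e with
    | _ a b =>
      show s(a, b) ∈ compEdges G' (φ c) ↔ s(a, b) ∈ compEdges G c
      simp only [compEdges, Finset.mem_filter, mem_edgeFinset, hedge', Sym2.mem_iff,
        forall_eq_or_imp, forall_eq, P1 c h1 h2]
      constructor
      · rintro ⟨h | h, hb⟩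
        · exact ⟨h, hb⟩
        · rcases Sym2.eq_iff.mp h with ⟨rfl, rfl⟩ | ⟨rfl, rfl⟩
          · exact absurd hb.1.symm h1
          · exact absurd hb.1.symm h2
      · rintro ⟨h, hb⟩
        exact ⟨Or.inl h, hb⟩
  have hEu : compEdges G' (φ cu) =
      (compEdges G cu ∪ compEdges G cv) ∪ {s(u, v)} := by
    ext e
    induction e with
    | _ a b =>
      show s(a, b) ∈ compEdges G' (φ cu) ↔
        s(a, b) ∈ (compEdges G cu ∪ compEdges G cv) ∪ {s(u, v)}
      simp only [compEdges, Finset.mem_filter, mem_edgeFinset, hedge', Sym2.mem_iff,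
        forall_eq_or_imp, forall_eq, P2, Finset.mem_union, Finset.mem_singleton]
      constructor
      · rintro ⟨h | h, hb⟩
        · have hab : G.connectedComponentMk a = G.connectedComponentMk b :=
            ConnectedComponent.sound (G.mem_edgeSet.mp h).reachable
          rcases hb.1 with h1 | h1
          · exact Or.inl (Or.inl ⟨h, h1, by rw [← hab]; exact h1⟩)
          · exact Or.inl (Or.inr ⟨h, h1, by rw [← hab]; exact h1⟩)
        · exact Or.inr h
      · rintro ((⟨h, ha, hb⟩ | ⟨h, ha, hb⟩) | h)
        · exact ⟨Or.inl h, Or.inl ha, Or.inl hb⟩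
        · exact ⟨Or.inl h, Or.inr ha, Or.inr hb⟩
        · refine ⟨Or.inr h, ?_⟩
          rcases Sym2.eq_iff.mp h with ⟨rfl, rfl⟩ | ⟨rfl, rfl⟩
          · exact ⟨Or.inl rfl, Or.inr rfl⟩
          · exact ⟨Or.inr rfl, Or.inl rfl⟩
  -- disjointness and cardinalities
  have hVdisj : Disjoint (compVerts G cu) (compVerts G cv) := by
    rw [Finset.disjoint_left]
    intro w h1 h2
    simp only [compVerts, Finset.mem_filter] at h1 h2
    exact hcomp (by rw [← h1.2, h2.2])
  have hEdisj : Disjoint (compEdges G cu) (compEdges G cv) := by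
    rw [Finset.disjoint_left]
    intro e h1 h2
    simp only [compEdges, Finset.mem_filter] at h1 h2
    exact hcomp (by rw [← h1.2 _ (Sym2.out_fst_mem e), h2.2 _ (Sym2.out_fst_mem e)])
  have huvE : s(u, v) ∉ compEdges G cu ∪ compEdges G cv := by
    simp only [Finset.mem_union, compEdges, Finset.mem_filter, mem_edgeFinset]
    rintro (⟨h, -⟩ | ⟨h, -⟩) <;> exact hadj h
  have hVcard : (compVerts G' (φ cu)).card
      = (compVerts G cu).card + (compVerts G cv).card := by
    rw [hVu, Finset.card_union_of_disjoint hVdisj]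
  have hEcard : (compEdges G' (φ cu)).card
      = (compEdges G cu).card + (compEdges G cv).card + 1 := by
    rw [hEu, Finset.card_union_of_disjoint (Finset.disjoint_singleton_right.mpr huvE),
      Finset.card_union_of_disjoint hEdisj, Finset.card_singleton]
  have hBu := card_verts_le G cu
  have hBv := card_verts_le G cv
  have hru : compCycleRank G' (φ cu) = i + j := by
    simp only [compCycleRank] at hi hj ⊢
    rw [hVcard, hEcard]
    omega
  have hrc : ∀ c : G.ConnectedComponent, c ≠ cu → c ≠ cv →
      compCycleRank G' (φ c) = compCycleRank G c := by
    intro c h1 h2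
    simp only [compCycleRank, hVc c h1 h2, hEc c h1 h2]
  -- injectivity and surjectivity of φ away from cv
  have hinj : ∀ x ∈ Finset.univ.erase cv, ∀ y ∈ Finset.univ.erase cv,
      φ x = φ y → x = y := by
    intro x hx y hy hxy
    obtain ⟨a, ha⟩ := x.exists_rep
    have ha' : G.connectedComponentMk a = x := ha
    obtain ⟨b, hb⟩ := y.exists_rep
    have hb' : G.connectedComponentMk b = y := hb
    rw [← ha', ← hb', hφmk, hφmk, ConnectedComponent.eq, hreach] at hxy
    rcases hxy with h | ⟨h1, h2⟩ | ⟨h1, h2⟩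
    · rw [← ha', ← hb']
      exact ConnectedComponent.sound h
    · exfalso
      apply (Finset.mem_erase.mp hy).1
      rw [← hb', hcv]
      exact ConnectedComponent.sound h2.symm
    · exfalso
      apply (Finset.mem_erase.mp hx).1
      rw [← ha', hcv]
      exact ConnectedComponent.sound h1
  have hsurj : (Finset.univ : Finset G'.ConnectedComponent)
      = (Finset.univ.erase cv).image φ := by
    ext c'
    simp only [Finset.mem_univ, true_iff, Finset.mem_image, Finset.mem_erase]
    obtain ⟨w, hw⟩ := c'.exists_rep
    have hw' : G'.connectedComponentMk w = c' := hw
    by_cases h : G.connectedComponentMk w = cv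
    · refine ⟨cu, ⟨hcomp, by simp⟩, ?_⟩
      rw [← hw']
      rw [hcu, hφmk, ConnectedComponent.eq, hreach]
      rw [hcv] at h
      exact Or.inr (Or.inl ⟨Reachable.refl u, (ConnectedComponent.exact h).symm⟩)
    · exact ⟨G.connectedComponentMk w, ⟨h, by simp⟩, by rw [hφmk, hw']⟩
  -- assemble the sums
  have hcuS : cu ∈ Finset.univ.erase cv :=
    Finset.mem_erase.mpr ⟨hcomp, Finset.mem_univ cu⟩
  have e1 : homotopyPoly G' = ∑ c ∈ Finset.univ.erase cv,
      (Polynomial.X : Polynomial ℤ) ^ compCycleRank G' (φ c) := by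
    rw [homotopyPoly_eq, hsurj, Finset.sum_image hinj]
  have e2 : ∑ c ∈ Finset.univ.erase cv,
      (Polynomial.X : Polynomial ℤ) ^ compCycleRank G' (φ c)
      = Polynomial.X ^ (i + j) + ∑ c ∈ (Finset.univ.erase cv).erase cu,
          (Polynomial.X : Polynomial ℤ) ^ compCycleRank G c := by
    rw [← Finset.add_sum_erase _ _ hcuS, hru]
    congr 1
    refine Finset.sum_congr rfl fun c hc => ?_
    rw [hrc c (Finset.mem_erase.mp hc).1
      (Finset.mem_erase.mp (Finset.mem_of_mem_erase hc)).1]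
  have e3 : homotopyPoly G = Polynomial.X ^ j + (Polynomial.X ^ i +
      ∑ c ∈ (Finset.univ.erase cv).erase cu,
        (Polynomial.X : Polynomial ℤ) ^ compCycleRank G c) := by
    rw [homotopyPoly_eq, ← Finset.add_sum_erase _ _ (Finset.mem_univ cv),
      ← Finset.add_sum_erase _ _ hcuS, ← hi, ← hj]
  rw [e1, e2, e3]
  ring
end

section
/- If an edge e with both endpoints in the same connected component of G (with cycle rank i) is added to G, then the homotopy polynomial of the resulting graph equals h_G(x) - x^i + x^{i+1}. -/
open SimpleGraph Polynomial

/-!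
Since `u` and `v` are already joined by a walk, adding the edge `uv` does not change
reachability, so the components of `G ⊔ uv` correspond to those of `G` with the same vertex sets.
Only the component `C` of `u` gains an edge, and its cycle rank `|E(C)| + 1 - |V(C)|` grows by
one: the truncated subtraction causes no trouble because a connected graph has at most
`|E| + 1` vertices.
-/

namespace SimpleGraph

variable {V : Type*} {G : SimpleGraph V} {u v : V}

lemma reachable_sup_edge_iff (huv : G.Reachable u v) {x y : V} :
    (G ⊔ edge u v).Reachable x y ↔ G.Reachable x y := by
  refine ⟨fun h => ?_, fun h => h.mono le_sup_left⟩
  obtain ⟨p⟩ := h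
  induction p with
  | nil => rfl
  | cons hadj _ ih =>
    refine Reachable.trans ?_ ih
    rcases hadj with hG | hE
    · exact hG.reachable
    · obtain ⟨⟨rfl, rfl⟩ | ⟨rfl, rfl⟩, -⟩ := (edge_adj _ _ _ _).mp hE
      exacts [huv, huv.symm]

def supEdgeConnectedComponentEquiv (huv : G.Reachable u v) :
    (G ⊔ edge u v).ConnectedComponent ≃ G.ConnectedComponent :=
  Quot.congrRight fun _ _ => reachable_sup_edge_iff huv

@[simp]
lemma supEdgeConnectedComponentEquiv_mk (huv : G.Reachable u v) (x : V) :
    supEdgeConnectedComponentEquiv huv ((G ⊔ edge u v).connectedComponentMk x) =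
      G.connectedComponentMk x :=
  rfl

lemma connectedComponentMk_sup_edge_eq_symm_iff (huv : G.Reachable u v)
    {c : G.ConnectedComponent} {x : V} :
    (G ⊔ edge u v).connectedComponentMk x = (supEdgeConnectedComponentEquiv huv).symm c ↔
      G.connectedComponentMk x = c := by
  rw [Equiv.eq_symm_apply, supEdgeConnectedComponentEquiv_mk]

end SimpleGraph

section

variable {V : Type*} [Fintype V] {G : SimpleGraph V} {u v : V}

lemma mem_compVerts {c : G.ConnectedComponent} {x : V} :
    x ∈ compVerts G c ↔ G.connectedComponentMk x = c := by
  simp [compVerts]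

lemma mem_compEdges {c : G.ConnectedComponent} {e : Sym2 V} :
    e ∈ compEdges G c ↔ e ∈ G.edgeSet ∧ ∀ x ∈ e, G.connectedComponentMk x = c := by
  simp [compEdges]

lemma card_compVerts (c : G.ConnectedComponent) : (compVerts G c).card = Nat.card c.supp := by
  rw [← Nat.card_eq_finsetCard]
  congr
  ext x
  simp [mem_compVerts]

lemma card_compEdges (c : G.ConnectedComponent) :
    (compEdges G c).card = Nat.card c.toSimpleGraph.edgeSet := by
  have hedges : (compEdges G c : Set (Sym2 V)) = c.toSimpleGraph.spanningCoe.edgeSet := by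
    ext e
    induction e using Sym2.ind with
    | _ x y =>
      simp only [Finset.mem_coe, mem_compEdges, mem_edgeSet, Sym2.mem_iff, forall_eq_or_imp,
        forall_eq, ConnectedComponent.adj_spanningCoe_toSimpleGraph,
        ConnectedComponent.mem_supp_iff]
      constructor
      · rintro ⟨hxy, hx, -⟩
        exact ⟨hx, hxy⟩
      · rintro ⟨hx, hxy⟩
        exact ⟨hxy, hx, (ConnectedComponent.connectedComponentMk_eq_of_adj hxy).symm.trans hx⟩
  rw [← Nat.card_eq_finsetCard, ← Finset.coe_sort_coe, hedges, edgeSet_map,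
    Nat.card_image_of_injective (Function.Embedding.sym2Map _).injective]
  rfl

lemma card_compVerts_le_card_compEdges_add_one (c : G.ConnectedComponent) :
    (compVerts G c).card ≤ (compEdges G c).card + 1 := by
  rw [card_compVerts, card_compEdges]
  exact c.connected_toSimpleGraph.card_vert_le_card_edgeSet_add_one

lemma compVerts_sup_edge (huv : G.Reachable u v) (c : G.ConnectedComponent) :
    compVerts (G ⊔ edge u v) ((supEdgeConnectedComponentEquiv huv).symm c) =
      compVerts G c := by
  ext x
  rw [mem_compVerts, mem_compVerts, connectedComponentMk_sup_edge_eq_symm_iff]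

lemma mem_compEdges_sup_edge (huv : G.Reachable u v) (hne : u ≠ v)
    {c : G.ConnectedComponent} {a : Sym2 V} :
    a ∈ compEdges (G ⊔ edge u v) ((supEdgeConnectedComponentEquiv huv).symm c) ↔
      a ∈ compEdges G c ∨ a = s(u, v) ∧ G.connectedComponentMk u = c := by
  simp only [mem_compEdges, connectedComponentMk_sup_edge_eq_symm_iff, edgeSet_sup,
    edgeSet_edge_of_ne hne, Set.mem_union, Set.mem_singleton_iff]
  constructor
  · rintro ⟨ha | rfl, hc⟩
    exacts [Or.inl ⟨ha, hc⟩, Or.inr ⟨rfl, hc u (Sym2.mem_mk_left u v)⟩]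
  · rintro (⟨ha, hc⟩ | ⟨rfl, rfl⟩)
    · exact ⟨Or.inl ha, hc⟩
    · refine ⟨Or.inr rfl, fun x hx => ?_⟩
      rcases Sym2.mem_iff.mp hx with rfl | rfl
      exacts [rfl, (ConnectedComponent.eq.mpr huv).symm]

lemma compEdges_sup_edge_of_ne (huv : G.Reachable u v) (hne : u ≠ v)
    {c : G.ConnectedComponent} (hc : c ≠ G.connectedComponentMk u) :
    compEdges (G ⊔ edge u v) ((supEdgeConnectedComponentEquiv huv).symm c) =
      compEdges G c := by
  ext a
  simp [mem_compEdges_sup_edge huv hne, hc.symm]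

lemma compEdges_sup_edge_self [DecidableEq V] (huv : G.Reachable u v) (hne : u ≠ v) :
    compEdges (G ⊔ edge u v)
        ((supEdgeConnectedComponentEquiv huv).symm (G.connectedComponentMk u)) =
      insert s(u, v) (compEdges G (G.connectedComponentMk u)) := by
  ext a
  simp [mem_compEdges_sup_edge huv hne, or_comm]

lemma compCycleRank_sup_edge_of_ne (huv : G.Reachable u v) (hne : u ≠ v)
    {c : G.ConnectedComponent} (hc : c ≠ G.connectedComponentMk u) :
    compCycleRank (G ⊔ edge u v) ((supEdgeConnectedComponentEquiv huv).symm c) =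
      compCycleRank G c := by
  rw [compCycleRank, compCycleRank, compEdges_sup_edge_of_ne huv hne hc, compVerts_sup_edge]

lemma compCycleRank_sup_edge_self (huv : G.Reachable u v) (hne : u ≠ v) (hadj : ¬G.Adj u v) :
    compCycleRank (G ⊔ edge u v)
        ((supEdgeConnectedComponentEquiv huv).symm (G.connectedComponentMk u)) =
      compCycleRank G (G.connectedComponentMk u) + 1 := by
  classical
  have hnew : s(u, v) ∉ compEdges G (G.connectedComponentMk u) :=
    fun h => hadj (mem_compEdges.1 h).1
  have := card_compVerts_le_card_compEdges_add_one (G.connectedComponentMk u)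
  rw [compCycleRank, compCycleRank, compEdges_sup_edge_self huv hne, compVerts_sup_edge,
    Finset.card_insert_of_notMem hnew]
  omega

lemma homotopyPoly_eq_sum (G : SimpleGraph V) [Fintype G.ConnectedComponent] :
    homotopyPoly G = ∑ c : G.ConnectedComponent, (X : ℤ[X]) ^ compCycleRank G c := by
  unfold homotopyPoly
  congr!

theorem homotopyPoly_sup_edge (huv : G.Reachable u v) (hne : u ≠ v) (hadj : ¬G.Adj u v) :
    homotopyPoly (G ⊔ edge u v) =
      homotopyPoly G - X ^ compCycleRank G (G.connectedComponentMk u) +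
        X ^ (compCycleRank G (G.connectedComponentMk u) + 1) := by
  classical
  set c₀ := G.connectedComponentMk u
  have hrest : ∀ c ∈ Finset.univ.erase c₀, compCycleRank (G ⊔ edge u v)
      ((supEdgeConnectedComponentEquiv huv).symm c) = compCycleRank G c :=
    fun c hc => compCycleRank_sup_edge_of_ne huv hne (Finset.ne_of_mem_erase hc)
  rw [homotopyPoly_eq_sum, homotopyPoly_eq_sum,
    ← (supEdgeConnectedComponentEquiv huv).symm.sum_comp,
    ← Finset.add_sum_erase _ _ (Finset.mem_univ c₀),
    ← Finset.add_sum_erase _ _ (Finset.mem_univ c₀),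
    compCycleRank_sup_edge_self huv hne hadj, Finset.sum_congr rfl fun c hc => by rw [hrest c hc]]
  ring

end

theorem stmt_4 {V : Type*} [Fintype V] (G : SimpleGraph V) (u v : V)
    (huv : u ≠ v) (hadj : ¬ G.Adj u v)
    (hcomp : G.connectedComponentMk u = G.connectedComponentMk v) (i : ℕ)
    (hi : i = compCycleRank G (G.connectedComponentMk u)) :
    homotopyPoly (G ⊔ SimpleGraph.fromEdgeSet {s(u, v)}) =
      homotopyPoly G - Polynomial.X ^ i + Polynomial.X ^ (i + 1) := by
  subst hi
  exact homotopyPoly_sup_edge (ConnectedComponent.exact hcomp) huv hadj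
end

section
/- The minimal number of edges in a connected simple graph with cycle rank k, denoted C_k, satisfies C_0 = 0 and C_k = floor(k + (3 + sqrt(8k - 7))/2) for k ≥ 1. -/
/-!
A connected graph on `n` vertices has between `n - 1` and `n.choose 2` edges, and every value in
between occurs: enlarge a spanning tree of `K_n` by any set of further edges. With `m = n - 1 + k`
edges the cycle rank is `k`, so `m ≤ n.choose 2` reads `k ≤ (n - 1).choose 2`. Hence
`C_k = k + r` for the least `r` with `k ≤ r.choose 2`, and for `k ≥ 1` the inequalities
`(r - 1).choose 2 < k ≤ r.choose 2` say exactly that `2r - 3 ≤ √(8k - 7) < 2r - 1`.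
-/

open SimpleGraph

/-- `EdgeCount m k` says there is a connected finite simple graph with `m` edges
and cycle rank `|E| - |V| + 1 = k` (expressed as `m + 1 = N + k`). -/
def EdgeCount (m k : ℕ) : Prop :=
  ∃ (N : ℕ) (G : SimpleGraph (Fin N)) (_ : Fintype G.edgeSet),
    G.Connected ∧ G.edgeFinset.card = m ∧ m + 1 = N + k

/-- `Cmin k` is the minimal number of edges of a connected simple graph with cycle rank `k`. -/
noncomputable def Cmin (k : ℕ) : ℕ := sInf {m | EdgeCount m k}

namespace SimpleGraph

variable {V : Type*} [Finite V] {G : SimpleGraph V}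

theorem Connected.exists_connected_le_natCard_edgeSet_eq (hG : G.Connected) {m : ℕ}
    (h₁ : Nat.card V ≤ m + 1) (h₂ : m ≤ Nat.card G.edgeSet) :
    ∃ H ≤ G, H.Connected ∧ Nat.card H.edgeSet = m := by
  classical
  have := Fintype.ofFinite V
  obtain ⟨T, hTG, hT⟩ := hG.exists_isTree_le
  have hTcard := hT.card_edgeFinset
  rw [Nat.card_eq_fintype_card] at h₁
  rw [Nat.card_eq_fintype_card, ← edgeFinset_card] at h₂
  obtain ⟨u, hTu, huG, hu⟩ := Finset.exists_subsuperset_card_eq (edgeFinset_mono hTG) (by omega) h₂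
  have huE : (u : Set (Sym2 V)) ⊆ G.edgeSet := by rw [← coe_edgeFinset]; exact_mod_cast huG
  have hH : (fromEdgeSet (u : Set (Sym2 V))).edgeSet = u :=
    (edgeSet_fromEdgeSet _).trans <| sdiff_eq_left.mpr <|
      Set.subset_compl_iff_disjoint_right.mp (huE.trans G.edgeSet_subset_compl_diagSet)
  refine ⟨fromEdgeSet u, ?_, hT.connected.mono ?_, ?_⟩
  · rwa [← edgeSet_subset_edgeSet, hH]
  · rw [← edgeSet_subset_edgeSet, hH, ← coe_edgeFinset]; exact_mod_cast hTu
  · rw [hH, Nat.card_coe_set_eq, Set.ncard_coe_finset, hu]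

end SimpleGraph

lemma Nat.choose_two_succ (n : ℕ) : (n + 1).choose 2 = n.choose 2 + n := by
  rw [Nat.choose_succ_succ', Nat.choose_one_right, add_comm]

lemma edgeCount_iff {m k : ℕ} : EdgeCount m k ↔ ∃ r : ℕ, m = k + r ∧ k ≤ r.choose 2 := by
  constructor
  · rintro ⟨N, G, _, hG, rfl, hrank⟩
    obtain ⟨r, rfl⟩ : ∃ r, N = r + 1 :=
      Nat.exists_eq_add_one_of_ne_zero (Fin.pos_iff_nonempty.mpr hG.nonempty).ne'
    have hle := G.card_edgeFinset_le_card_choose_two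
    rw [Fintype.card_fin, Nat.choose_two_succ] at hle
    exact ⟨r, by omega, by omega⟩
  · rintro ⟨r, rfl, hk⟩
    have htop : Nat.card (⊤ : SimpleGraph (Fin (r + 1))).edgeSet = r.choose 2 + r := by
      rw [Nat.card_eq_fintype_card, ← edgeFinset_card, card_edgeFinset_top_eq_card_choose_two,
        Fintype.card_fin, Nat.choose_two_succ]
    have hconn : (⊤ : SimpleGraph (Fin (r + 1))).Connected := connected_top
    obtain ⟨H, -, hH, hcard⟩ :=
      hconn.exists_connected_le_natCard_edgeSet_eq (m := k + r) (by simp) (by omega)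
    classical
    refine ⟨r + 1, H, inferInstance, hH, ?_, by omega⟩
    rw [edgeFinset_card, ← Nat.card_eq_fintype_card, hcard]

lemma exists_le_choose_two (k : ℕ) : ∃ r : ℕ, k ≤ r.choose 2 :=
  ⟨k + 1, by rw [Nat.choose_two_succ]; omega⟩

lemma Cmin_eq_add_find (k : ℕ) : Cmin k = k + Nat.find (exists_le_choose_two k) := by
  have hmem : k + Nat.find (exists_le_choose_two k) ∈ {m | EdgeCount m k} :=
    edgeCount_iff.mpr ⟨_, rfl, Nat.find_spec (exists_le_choose_two k)⟩
  refine le_antisymm (Nat.sInf_le hmem) (le_csInf ⟨_, hmem⟩ ?_)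
  rintro m hm
  obtain ⟨r, rfl, hr⟩ := edgeCount_iff.mp hm
  exact Nat.add_le_add_left (Nat.find_min' (exists_le_choose_two k) hr) k

lemma floor_three_add_sqrt_div_two_eq {k r : ℕ} (hlt : r.choose 2 < k)
    (hle : k ≤ (r + 1).choose 2) :
    ⌊(3 + √(8 * (k : ℝ) - 7)) / 2⌋ = r + 1 := by
  have hr : (1 : ℝ) ≤ r := by
    exact_mod_cast Nat.one_le_iff_ne_zero.mpr <| by rintro rfl; exact hlt.not_ge hle
  have hlt' : (r.choose 2 : ℝ) + 1 ≤ k := by exact_mod_cast hlt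
  have hle' : (k : ℝ) ≤ (r + 1).choose 2 := by exact_mod_cast hle
  rw [Nat.cast_choose_two] at hlt' hle'
  push_cast at hle'
  have hlo : 2 * (r : ℝ) - 1 ≤ √(8 * (k : ℝ) - 7) :=
    (Real.le_sqrt (by linarith) (by nlinarith)).mpr (by nlinarith)
  have hhi : √(8 * (k : ℝ) - 7) < 2 * r + 1 :=
    (Real.sqrt_lt' (by linarith)).mpr (by nlinarith)
  rw [Int.floor_eq_iff]
  push_cast
  constructor <;> linarith

theorem stmt_6 :
    Cmin 0 = 0 ∧
      ∀ k : ℕ, 1 ≤ k →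
        (Cmin k : ℤ) = ⌊(k : ℝ) + (3 + Real.sqrt (8 * (k : ℝ) - 7)) / 2⌋ := by
  refine ⟨by simp [Cmin_eq_add_find], fun k hk => ?_⟩
  obtain ⟨r, hr⟩ : ∃ r, Nat.find (exists_le_choose_two k) = r + 1 :=
    Nat.exists_eq_add_one_of_ne_zero fun h => by
      have := h ▸ Nat.find_spec (exists_le_choose_two k)
      rw [Nat.choose_zero_succ] at this
      omega
  have hlt : r.choose 2 < k := lt_of_not_ge <| Nat.find_min (exists_le_choose_two k) (by omega)
  have hle : k ≤ (r + 1).choose 2 := hr ▸ Nat.find_spec (exists_le_choose_two k)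
  rw [Int.floor_natCast_add, floor_three_add_sqrt_div_two_eq hlt hle, Cmin_eq_add_find, hr]
  push_cast; ring
end

section
/- The complement of T = {1} ∪ {C_k : k ≥ 1} in the positive integers is exactly the set {m(m+1)/2 + 1 : m ≥ 1} = {2, 4, 7, 11, ...}, i.e., the numbers one more than the triangular numbers (excluding 1 itself). -/
/-- `Ck k` is the minimal number of edges of a connected simple graph with cycle rank `k`,
given by `C_0 = 0` and `C_k = ⌊k + (3 + √(8k - 7))/2⌋` for `k ≥ 1`. -/
noncomputable def Ck (k : ℕ) : ℕ :=
  if k = 0 then 0 else ⌊(k : ℝ) + (3 + Real.sqrt (8 * (k : ℝ) - 7)) / 2⌋₊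

/-- The set `T = {1} ∪ {C_k : k ≥ 1}`. -/
def Tset : Set ℕ := {1} ∪ {n | ∃ k : ℕ, 1 ≤ k ∧ n = Ck k}

lemma even_aux (m : ℕ) : ∃ r, m * m + m = 2 * r := by
  obtain ⟨r, hr⟩ := Nat.even_mul_succ_self m
  exact ⟨r, by nlinarith⟩

lemma Ck_block (m k : ℕ) (hm : 1 ≤ m) (h1 : m * m + 2 ≤ 2 * k + m)
    (h2 : 2 * k ≤ m * m + m) : Ck k = k + m + 1 := by
  have hk : k ≠ 0 := by nlinarith
  rw [Ck, if_neg hk]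
  have hm' : (1 : ℝ) ≤ (m : ℝ) := by exact_mod_cast hm
  have h1' : (m : ℝ) * m + 2 ≤ 2 * k + m := by exact_mod_cast h1
  have h2' : (2 : ℝ) * k ≤ m * m + m := by exact_mod_cast h2
  set s : ℝ := Real.sqrt (8 * (k : ℝ) - 7) with hs
  have hs0 : 0 ≤ s := Real.sqrt_nonneg _
  have hsq : s ^ 2 = 8 * (k : ℝ) - 7 := by
    rw [hs, Real.sq_sqrt]; nlinarith
  have hlb : 2 * (m : ℝ) - 1 ≤ s := by
    nlinarith [sq_nonneg (s - (2 * (m:ℝ) - 1)), sq_nonneg (s + (2 * (m:ℝ) - 1))]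
  have hub : s < 2 * (m : ℝ) + 1 := by nlinarith [sq_nonneg (s - (2 * (m:ℝ) + 1))]
  rw [Nat.floor_eq_iff (by positivity)]
  constructor
  · push_cast; linarith
  · push_cast; linarith

lemma block_exists (k : ℕ) (hk : 1 ≤ k) :
    ∃ m : ℕ, 1 ≤ m ∧ m * m + 2 ≤ 2 * k + m ∧ 2 * k ≤ m * m + m := by
  induction k with
  | zero => omega
  | succ n ih =>
    rcases Nat.eq_or_lt_of_le hk with h | h
    · exact ⟨1, by omega⟩
    · obtain ⟨m, hm, h1, h2⟩ := ih (by omega)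
      obtain ⟨r, hr⟩ := even_aux m
      rcases Nat.lt_or_ge (2 * n) (m * m + m) with hlt | hge
      · exact ⟨m, hm, by omega, by omega⟩
      · refine ⟨m + 1, by omega, ?_, ?_⟩ <;> nlinarith

theorem stmt_10 :
    {n : ℕ | 0 < n} \ Tset = {n : ℕ | ∃ m : ℕ, 1 ≤ m ∧ n = m * (m + 1) / 2 + 1} := by
  ext n
  simp only [Set.mem_diff, Set.mem_setOf_eq, Tset, Set.mem_union, Set.mem_singleton_iff,
    not_or, not_exists]
  constructor
  · rintro ⟨hn, hn1, hnc⟩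
    have hn2 : 2 ≤ n := by omega
    obtain ⟨m, hm, h1, h2⟩ := block_exists (n - 1) (by omega)
    obtain ⟨r, hr⟩ := even_aux m
    have hp : m * m + m = m * (m + 1) := by ring
    by_cases heq : 2 * (n - 1) = m * m + m
    · refine ⟨m, hm, ?_⟩
      have : m * (m + 1) / 2 = n - 1 := by omega
      omega
    · exfalso
      have hpar : 2 * (n - 1) + 2 ≤ m * m + m := by omega
      have hm2 : 2 ≤ m := by nlinarith
      obtain ⟨p, rfl⟩ : ∃ p, m = p + 2 := ⟨m - 2, by omega⟩
      have e1 : (p + 2) * (p + 2) = p * p + 4 * p + 4 := by ring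
      have e2 : (p + 1) * (p + 1) = p * p + 2 * p + 1 := by ring
      have hk := Ck_block (p + 1) (n - (p + 2)) (by omega) (by omega) (by omega)
      exact hnc (n - (p + 2)) ⟨by omega, by omega⟩
  · rintro ⟨m, hm, rfl⟩
    have e0 : m * (m + 1) = m * m + m := by ring
    have hp : m * (m + 1) / 2 * 2 = m * (m + 1) :=
      Nat.div_mul_cancel (Nat.even_mul_succ_self m).two_dvd
    have h2m : 2 ≤ m * (m + 1) := by
      have := Nat.mul_le_mul hm (Nat.succ_le_succ hm)
      omega
    refine ⟨by omega, by omega, ?_⟩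
    rintro k ⟨hk, hck⟩
    obtain ⟨m', hm', h1, h2⟩ := block_exists k hk
    rw [Ck_block m' k hm' h1 h2] at hck
    have hTm : m * (m + 1) = 2 * k + 2 * m' := by omega
    have hlt : m' < m := by
      by_contra h
      push_neg at h
      have := Nat.mul_le_mul h (by omega : m + 1 ≤ m' + 1)
      have e : m' * (m' + 1) = m' * m' + m' := by ring
      omega
    have hgt : m ≤ m' := by
      by_contra h
      push_neg at h
      have := Nat.mul_le_mul h (by omega : m' + 2 ≤ m + 1)
      simp only [Nat.succ_eq_add_one] at this
      have e : (m' + 1) * (m' + 2) = m' * m' + 3 * m' + 2 := by ring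
      omega
    omega
end

section
/- For integers L1, L2 ≥ 0 and any M ≥ 0, the number of polynomials with nonnegative integer coefficients having edge cost at most M and Euler characteristic L1 equals the number with edge cost at most M and Euler characteristic L2. -/
/-- The edge cost `C(h) = Σ a_k C_k` of a polynomial `h = Σ a_k x^k` with
nonnegative integer coefficients. -/
noncomputable def polyCost (h : Polynomial ℕ) : ℕ :=
  ∑ k ∈ h.support, h.coeff k * Ck k

/-- The Euler characteristic `L(h) = h(1) - h'(1) = Σ a_k (1 - k)`. -/
def polyEuler (h : Polynomial ℕ) : ℤ :=
  ∑ k ∈ h.support, (h.coeff k : ℤ) * (1 - (k : ℤ))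

/-- `Pol M L` is the set of polynomials with nonnegative integer coefficients,
edge cost at most `M`, and Euler characteristic `L`. -/
def Pol (M : ℕ) (L : ℤ) : Set (Polynomial ℕ) :=
  {h | polyCost h ≤ M ∧ polyEuler h = L}

lemma Ck_zero : Ck 0 = 0 := rfl

lemma polyCost_eq_sum (h : Polynomial ℕ) (s : Finset ℕ) (hs : h.support ⊆ s) :
    polyCost h = ∑ k ∈ s, h.coeff k * Ck k :=
  Finset.sum_subset hs (fun k _ hk => by
    simp [Polynomial.notMem_support_iff.mp hk])

lemma polyEuler_eq_sum (h : Polynomial ℕ) (s : Finset ℕ) (hs : h.support ⊆ s) :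
    polyEuler h = ∑ k ∈ s, (h.coeff k : ℤ) * (1 - (k : ℤ)) :=
  Finset.sum_subset hs (fun k _ hk => by
    simp [Polynomial.notMem_support_iff.mp hk])

lemma support_add_C (h : Polynomial ℕ) (d : ℕ) :
    (h + Polynomial.C d).support ⊆ h.support ∪ {0} := by
  intro k hk
  rw [Polynomial.mem_support_iff] at hk
  by_contra hc
  simp only [Finset.mem_union, Finset.mem_singleton, Polynomial.mem_support_iff, not_or,
    not_not] at hc
  apply hk
  rw [Polynomial.coeff_add, hc.1, Polynomial.coeff_C, if_neg hc.2, add_zero]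

lemma polyCost_add_C (h : Polynomial ℕ) (d : ℕ) :
    polyCost (h + Polynomial.C d) = polyCost h := by
  rw [polyCost_eq_sum (h + Polynomial.C d) (h.support ∪ {0}) (support_add_C h d),
    polyCost_eq_sum h (h.support ∪ {0}) (Finset.subset_union_left)]
  apply Finset.sum_congr rfl
  intro k _
  rcases eq_or_ne k 0 with rfl | hk
  · simp [Ck_zero]
  · rw [Polynomial.coeff_add, Polynomial.coeff_C, if_neg hk, add_zero]

lemma polyEuler_add_C (h : Polynomial ℕ) (d : ℕ) :
    polyEuler (h + Polynomial.C d) = polyEuler h + d := by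
  rw [polyEuler_eq_sum (h + Polynomial.C d) (h.support ∪ {0}) (support_add_C h d),
    polyEuler_eq_sum h (h.support ∪ {0}) (Finset.subset_union_left)]
  have : ∀ k ∈ h.support ∪ {0},
      ((h + Polynomial.C d).coeff k : ℤ) * (1 - (k : ℤ)) =
      (h.coeff k : ℤ) * (1 - (k : ℤ)) + (if k = 0 then (d : ℤ) else 0) := by
    intro k _
    rcases eq_or_ne k 0 with rfl | hk
    · simp [Polynomial.coeff_add]
    · rw [Polynomial.coeff_add, Polynomial.coeff_C, if_neg hk, if_neg hk, add_zero, add_zero]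
  rw [Finset.sum_congr rfl this, Finset.sum_add_distrib, Finset.sum_ite_eq'
    (h.support ∪ {0}) 0 (fun _ => (d : ℤ)), if_pos (by simp)]

lemma polyEuler_le_coeff_zero (h : Polynomial ℕ) : polyEuler h ≤ (h.coeff 0 : ℤ) := by
  have : polyEuler h ≤ ∑ k ∈ h.support, (if k = 0 then (h.coeff 0 : ℤ) else 0) := by
    apply Finset.sum_le_sum
    intro k _
    rcases eq_or_ne k 0 with rfl | hk
    · simp
    · rw [if_neg hk]
      apply mul_nonpos_of_nonneg_of_nonpos (by positivity)
      have : (1 : ℤ) ≤ (k : ℤ) := by exact_mod_cast Nat.one_le_iff_ne_zero.mpr hk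
      omega
  rw [Finset.sum_ite_eq' h.support 0 (fun _ => (h.coeff 0 : ℤ))] at this
  split_ifs at this with hmem
  · exact this
  · exact this.trans (by positivity)

lemma key (M : ℕ) (L1 L2 : ℤ) (h1 : 0 ≤ L1) (h2 : 0 ≤ L2) (hle : L1 ≤ L2) :
    (Pol M L1).ncard = (Pol M L2).ncard := by
  set d : ℕ := (L2 - L1).toNat with hd
  have hdZ : (d : ℤ) = L2 - L1 := Int.toNat_of_nonneg (by omega)
  have hinj : Function.Injective (fun h : Polynomial ℕ => h + Polynomial.C d) := by
    intro a b hab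
    ext k
    have := congrArg (fun p => Polynomial.coeff p k) hab
    simp only [Polynomial.coeff_add] at this
    omega
  have himg : Pol M L2 = (fun h : Polynomial ℕ => h + Polynomial.C d) '' Pol M L1 := by
    ext g
    constructor
    · rintro ⟨hgc, hge⟩
      have hge0 : d ≤ g.coeff 0 := by
        have hb := polyEuler_le_coeff_zero g
        rw [hge] at hb
        omega
      refine ⟨g.erase 0 + Polynomial.C (g.coeff 0 - d), ?_, ?_⟩
      · have heq : g.erase 0 + Polynomial.C (g.coeff 0 - d) + Polynomial.C d = g := by
          rw [add_assoc, ← map_add, Nat.sub_add_cancel hge0, add_comm,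
            ← Polynomial.monomial_zero_left, Polynomial.monomial_add_erase]
        constructor
        · calc polyCost (g.erase 0 + Polynomial.C (g.coeff 0 - d))
              = polyCost (g.erase 0 + Polynomial.C (g.coeff 0 - d) + Polynomial.C d) :=
                (polyCost_add_C _ d).symm
            _ = polyCost g := by rw [heq]
            _ ≤ M := hgc
        · have hE := polyEuler_add_C (g.erase 0 + Polynomial.C (g.coeff 0 - d)) d
          rw [heq, hge] at hE
          omega
      · show Polynomial.erase 0 g + Polynomial.C (g.coeff 0 - d) + Polynomial.C d = g
        rw [add_assoc, ← map_add, Nat.sub_add_cancel hge0, add_comm,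
          ← Polynomial.monomial_zero_left, Polynomial.monomial_add_erase]
    · rintro ⟨h, ⟨hc, he⟩, rfl⟩
      refine ⟨by rwa [polyCost_add_C], ?_⟩
      rw [polyEuler_add_C, he, hdZ]; ring
  rw [himg, Set.ncard_image_of_injective _ hinj]

theorem stmt_11 (M : ℕ) (L1 L2 : ℤ) (h1 : 0 ≤ L1) (h2 : 0 ≤ L2) :
    (Pol M L1).ncard = (Pol M L2).ncard := by
  rcases le_total L1 L2 with h | h
  · exact key M L1 L2 h1 h2 h
  · exact (key M L2 L1 h2 h1 h).symm
end

section
/- For M ≥ 0, the number of polynomials with nonnegative integer coefficients having edge cost at most M and Euler characteristic 0 equals the number of partitions of M into parts taken from the set T = {1} ∪ {C_k : k ≥ 1}. -/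
lemma cost_eq (h : Polynomial ℕ) {U : Finset ℕ} (hU : h.support ⊆ U) :
    polyCost h = ∑ k ∈ U, h.coeff k * Ck k := by
  apply Finset.sum_subset hU
  intro x _ hx
  simp [Polynomial.notMem_support_iff.mp hx]

lemma euler_eq (h : Polynomial ℕ) {U : Finset ℕ} (hU : h.support ⊆ U) :
    polyEuler h = ∑ k ∈ U, (h.coeff k : ℤ) * (1 - (k : ℤ)) := by
  apply Finset.sum_subset hU
  intro x _ hx
  simp [Polynomial.notMem_support_iff.mp hx]

noncomputable def gmap (M : ℕ) (h : Polynomial ℕ) : ℕ →₀ ℕ :=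
  Finsupp.single 1 (M - polyCost h) +
    ∑ k ∈ h.support.erase 0, Finsupp.single (Ck k) (h.coeff k)

lemma ck_ge {k : ℕ} (hk : 1 ≤ k) : k + 2 ≤ Ck k := by
  rw [Ck, if_neg (by omega)]
  apply Nat.le_floor
  have h1 : (1:ℝ) ≤ Real.sqrt (8 * (k:ℝ) - 7) := by
    rw [show (1:ℝ) = Real.sqrt 1 by simp]
    apply Real.sqrt_le_sqrt
    have : (1:ℝ) ≤ (k:ℝ) := by exact_mod_cast hk
    linarith
  push_cast
  linarith

lemma ck_lt {j k : ℕ} (hj : 1 ≤ j) (hjk : j < k) : Ck j < Ck k := by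
  have hk : 1 ≤ k := by omega
  rw [Ck, if_neg (by omega), Ck, if_neg (by omega)]
  have hs : Real.sqrt (8 * (j:ℝ) - 7) ≤ Real.sqrt (8 * (k:ℝ) - 7) := by
    apply Real.sqrt_le_sqrt
    have : (j:ℝ) ≤ (k:ℝ) := by exact_mod_cast hjk.le
    linarith
  have hs0 : (0:ℝ) ≤ Real.sqrt (8 * (j:ℝ) - 7) := Real.sqrt_nonneg _
  have hexprj : (0:ℝ) ≤ (j:ℝ) + (3 + Real.sqrt (8 * (j:ℝ) - 7)) / 2 := by positivity
  have hfl := Nat.floor_le hexprj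
  rw [Nat.lt_iff_add_one_le]
  apply Nat.le_floor
  push_cast
  have hjk' : (j:ℝ) + 1 ≤ (k:ℝ) := by exact_mod_cast hjk
  linarith

lemma ck_inj {j k : ℕ} (hj : 1 ≤ j) (hk : 1 ≤ k) (h : Ck j = Ck k) : j = k := by
  rcases lt_trichotomy j k with h1 | h1 | h1
  · exact absurd h (ck_lt hj h1).ne
  · exact h1
  · exact absurd h.symm (ck_lt hk h1).ne

lemma ck_ne_one {k : ℕ} (hk : 1 ≤ k) : Ck k ≠ 1 := by
  have := ck_ge hk; omega

lemma gmap_apply_ck (M : ℕ) (h : Polynomial ℕ) {j : ℕ} (hj : 1 ≤ j) :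
    gmap M h (Ck j) = h.coeff j := by
  rw [gmap, Finsupp.add_apply, Finsupp.single_apply,
    if_neg (fun hh => ck_ne_one hj hh.symm), Finset.sum_apply']
  simp only [Finsupp.single_apply]
  rcases eq_or_ne (h.coeff j) 0 with h0 | h0
  · rw [h0, Finset.sum_eq_zero, zero_add]
    intro k hk
    rw [Finset.mem_erase] at hk
    rw [if_neg]
    intro hckj
    exact (Polynomial.mem_support_iff.mp hk.2) (ck_inj (by omega) hj hckj ▸ h0)
  · rw [zero_add, Finset.sum_eq_single j]
    · simp
    · intro k hk hkj
      rw [Finset.mem_erase] at hk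
      rw [if_neg]
      exact fun hckj => hkj (ck_inj (by omega) hj hckj)
    · intro hjs
      exact absurd (Finset.mem_erase.mpr ⟨by omega, Polynomial.mem_support_iff.mpr h0⟩) hjs

lemma gmap_support (M : ℕ) (h : Polynomial ℕ) : ↑(gmap M h).support ⊆ Tset := by
  refine subset_trans (Finset.coe_subset.mpr (Finsupp.support_add)) ?_
  rw [Finset.coe_union]
  apply Set.union_subset
  · refine subset_trans (Finset.coe_subset.mpr Finsupp.support_single_subset) ?_
    intro x hx
    simp only [Finset.coe_singleton, Set.mem_singleton_iff] at hx
    exact Or.inl hx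
  · refine subset_trans (Finset.coe_subset.mpr (Finsupp.support_finset_sum)) ?_
    intro x hx
    simp only [Finset.coe_biUnion, Set.mem_iUnion] at hx
    obtain ⟨k, hk, hx⟩ := hx
    have hk' := Finset.mem_erase.mp hk
    have := Finsupp.support_single_subset hx
    simp only [Finset.mem_singleton] at this
    exact Or.inr ⟨k, by omega, this⟩

def wtHom : (ℕ →₀ ℕ) →+ ℕ where
  toFun f := f.sum (fun t m => t * m)
  map_zero' := by simp
  map_add' f g := Finsupp.sum_add_index (by simp) (by intros; ring)

lemma gmap_sum (M : ℕ) (h : Polynomial ℕ) (hc : polyCost h ≤ M) :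
    (gmap M h).sum (fun t m => t * m) = M := by
  have key : (gmap M h).sum (fun t m => t * m) = wtHom (gmap M h) := rfl
  rw [key, gmap, map_add, map_sum]
  have hsingle : wtHom (Finsupp.single 1 (M - polyCost h)) = M - polyCost h := by
    show (Finsupp.single 1 (M - polyCost h)).sum (fun t m => t * m) = _
    rw [Finsupp.sum_single_index (by simp), one_mul]
  have hterm : ∀ k ∈ h.support.erase 0,
      wtHom (Finsupp.single (Ck k) (h.coeff k)) = h.coeff k * Ck k := by
    intro k _
    show (Finsupp.single (Ck k) (h.coeff k)).sum (fun t m => t * m) = _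
    rw [Finsupp.sum_single_index (by simp), mul_comm]
  rw [hsingle, Finset.sum_congr rfl hterm]
  have hcost : ∑ k ∈ h.support.erase 0, h.coeff k * Ck k = polyCost h := by
    rw [polyCost]
    by_cases h0 : 0 ∈ h.support
    · rw [← Finset.add_sum_erase _ _ h0]
      simp [Ck]
    · rw [Finset.erase_eq_of_notMem h0]
  rw [hcost]
  omega

lemma gmap_injOn (M : ℕ) : Set.InjOn (gmap M) (Pol M 0) := by
  intro h1 hm1 h2 hm2 heq
  have hcoeff : ∀ j : ℕ, 1 ≤ j → h1.coeff j = h2.coeff j := by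
    intro j hj
    rw [← gmap_apply_ck M h1 hj, ← gmap_apply_ck M h2 hj, heq]
  ext j
  rcases Nat.eq_zero_or_pos j with hj | hj
  · subst hj
    set U := insert 0 (h1.support ∪ h2.support) with hU
    have h0U : (0:ℕ) ∈ U := Finset.mem_insert_self _ _
    have hU1 : h1.support ⊆ U := fun x hx =>
      Finset.mem_insert_of_mem (Finset.mem_union_left _ hx)
    have hU2 : h2.support ⊆ U := fun x hx =>
      Finset.mem_insert_of_mem (Finset.mem_union_right _ hx)
    have he1 := (euler_eq h1 hU1).symm.trans hm1.2
    have he2 := (euler_eq h2 hU2).symm.trans hm2.2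
    rw [← Finset.add_sum_erase _ _ h0U] at he1 he2
    have hsum : ∑ k ∈ U.erase 0, (h1.coeff k : ℤ) * (1 - (k:ℤ)) =
        ∑ k ∈ U.erase 0, (h2.coeff k : ℤ) * (1 - (k:ℤ)) := by
      apply Finset.sum_congr rfl
      intro k hk
      have := Finset.mem_erase.mp hk
      rw [hcoeff k (by omega)]
    have : (h1.coeff 0 : ℤ) = (h2.coeff 0 : ℤ) := by
      simp only [Nat.cast_zero] at he1 he2
      omega
    exact_mod_cast this
  · exact hcoeff j hj

noncomputable def kOf (n : ℕ) : ℕ := sInf {k | 1 ≤ k ∧ n = Ck k}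

lemma kOf_spec {n : ℕ} (h : ∃ k, 1 ≤ k ∧ n = Ck k) : 1 ≤ kOf n ∧ Ck (kOf n) = n := by
  have := Nat.sInf_mem (⟨h.choose, h.choose_spec⟩ : {k | 1 ≤ k ∧ n = Ck k}.Nonempty)
  exact ⟨this.1, this.2.symm⟩

lemma gmap_surj (M : ℕ) (f : ℕ →₀ ℕ) (hT : ↑f.support ⊆ Tset)
    (hsum : f.sum (fun t m => t * m) = M) : ∃ h ∈ Pol M 0, gmap M h = f := by
  classical
  set S := f.support.erase 1 with hS
  have hSmem : ∀ n ∈ S, 1 ≤ kOf n ∧ Ck (kOf n) = n := by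
    intro n hn
    have hn' := Finset.mem_erase.mp hn
    have := hT hn'.2
    rcases this with h1 | ⟨k, hk, hkn⟩
    · exact absurd h1 hn'.1
    · exact kOf_spec ⟨k, hk, hkn⟩
  have hkOf_inj : Set.InjOn kOf S := by
    intro a ha b hb hab
    rw [← (hSmem a ha).2, ← (hSmem b hb).2, hab]
  set a0 : ℕ := ∑ n ∈ S, (kOf n - 1) * f n with ha0
  set h : Polynomial ℕ := Polynomial.C a0 + ∑ n ∈ S, Polynomial.monomial (kOf n) (f n)
    with hh
  -- coefficient lemmas
  have hc0 : h.coeff 0 = a0 := by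
    rw [hh, Polynomial.coeff_add, Polynomial.coeff_C_zero, Polynomial.finset_sum_coeff]
    rw [Finset.sum_eq_zero, add_zero]
    intro n hn
    rw [Polynomial.coeff_monomial, if_neg]
    have := (hSmem n hn).1; omega
  have hcj : ∀ j : ℕ, 1 ≤ j → h.coeff j = f (Ck j) := by
    intro j hj
    rw [hh, Polynomial.coeff_add, Polynomial.coeff_C, if_neg (by omega),
      Polynomial.finset_sum_coeff, zero_add]
    simp only [Polynomial.coeff_monomial]
    by_cases hfj : f (Ck j) = 0
    · rw [hfj, Finset.sum_eq_zero]
      intro n hn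
      rw [if_neg]
      intro hkn
      have h2 := (hSmem n hn).2
      rw [hkn] at h2
      rw [← h2] at hn
      exact Finsupp.mem_support_iff.mp (Finset.mem_erase.mp hn).2 hfj
    · have hCkS : Ck j ∈ S := Finset.mem_erase.mpr
        ⟨(ck_ne_one hj), Finsupp.mem_support_iff.mpr hfj⟩
      rw [Finset.sum_eq_single (Ck j)]
      · have hk := hSmem (Ck j) hCkS
        rw [if_pos (ck_inj hk.1 hj hk.2)]
      · intro n hn hne
        rw [if_neg]
        intro hkn
        exact hne (by rw [← (hSmem n hn).2, hkn])
      · intro hns; exact absurd hCkS hns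
  -- support of h
  have hsupp : h.support ⊆ insert 0 (S.image kOf) := by
    intro j hj
    rcases Nat.eq_zero_or_pos j with h0 | h0
    · exact h0 ▸ Finset.mem_insert_self _ _
    · apply Finset.mem_insert_of_mem
      have hfj : f (Ck j) ≠ 0 := by
        rw [← hcj j h0]; exact Polynomial.mem_support_iff.mp hj
      have hCkS : Ck j ∈ S := Finset.mem_erase.mpr
        ⟨(ck_ne_one h0), Finsupp.mem_support_iff.mpr hfj⟩
      apply Finset.mem_image.mpr
      refine ⟨Ck j, hCkS, ?_⟩
      have hk := hSmem (Ck j) hCkS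
      exact ck_inj hk.1 h0 hk.2
  have h0img : (0:ℕ) ∉ S.image kOf := by
    intro hc
    obtain ⟨n, hn, hn0⟩ := Finset.mem_image.mp hc
    have := (hSmem n hn).1; omega
  -- cost
  have hck0 : Ck 0 = 0 := by simp [Ck]
  have hcost : polyCost h = ∑ n ∈ S, n * f n := by
    rw [cost_eq h hsupp, Finset.sum_insert h0img, hck0, mul_zero, zero_add,
      Finset.sum_image (fun a ha b hb => hkOf_inj ha hb)]
    apply Finset.sum_congr rfl
    intro n hn
    have hk := hSmem n hn
    rw [hcj _ hk.1, hk.2, mul_comm]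
  -- sum decomposition of M
  have hM : M = f 1 + ∑ n ∈ S, n * f n := by
    rw [← hsum, Finsupp.sum]
    by_cases h1 : 1 ∈ f.support
    · rw [← Finset.add_sum_erase _ _ h1, one_mul]
    · rw [Finsupp.notMem_support_iff.mp h1, hS, Finset.erase_eq_of_notMem h1, zero_add]
  have hcostle : polyCost h ≤ M := by omega
  have hMsub : M - polyCost h = f 1 := by omega
  -- euler
  have ha0' : (a0 : ℤ) = ∑ n ∈ S, ((kOf n : ℤ) - 1) * f n := by
    rw [ha0, Nat.cast_sum]
    apply Finset.sum_congr rfl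
    intro n hn
    have := (hSmem n hn).1
    push_cast [Nat.cast_sub this]
    ring
  have heuler : polyEuler h = 0 := by
    rw [euler_eq h hsupp, Finset.sum_insert h0img,
      Finset.sum_image (fun a ha b hb => hkOf_inj ha hb), hc0]
    have e0 : (a0:ℤ) * (1 - ((0:ℕ):ℤ)) = ∑ n ∈ S, ((kOf n:ℤ) - 1) * f n := by
      rw [ha0']; simp
    rw [e0, ← Finset.sum_add_distrib]
    apply Finset.sum_eq_zero
    intro n hn
    rw [hcj _ (hSmem n hn).1, (hSmem n hn).2]
    push_cast
    ring
  refine ⟨h, ⟨hcostle, heuler⟩, ?_⟩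
  -- gmap M h = f
  rw [gmap, hMsub]
  have hsub2 : h.support.erase 0 ⊆ S.image kOf := by
    intro k hk
    have := hsupp (Finset.mem_erase.mp hk).2
    rcases Finset.mem_insert.mp this with h0 | h0
    · exact absurd h0 (Finset.mem_erase.mp hk).1
    · exact h0
  have hvanish : ∀ k ∈ Finset.image kOf S, k ∉ h.support.erase 0 →
      Finsupp.single (Ck k) (h.coeff k) = 0 := by
    intro k hk hk2
    have hk0 : k ≠ 0 := by
      intro h0; exact h0img (h0 ▸ hk)
    have : k ∉ h.support := fun hc => hk2 (Finset.mem_erase.mpr ⟨hk0, hc⟩)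
    rw [Polynomial.notMem_support_iff.mp this, Finsupp.single_zero]
  have hsum2 : ∑ k ∈ h.support.erase 0, Finsupp.single (Ck k) (h.coeff k) =
      ∑ n ∈ S, Finsupp.single n (f n) := by
    rw [Finset.sum_subset hsub2 hvanish,
      Finset.sum_image (fun a ha b hb => hkOf_inj ha hb)]
    apply Finset.sum_congr rfl
    intro n hn
    have hk := hSmem n hn
    rw [hcj _ hk.1, hk.2]
  rw [hsum2]
  by_cases h1 : 1 ∈ f.support
  · conv_rhs => rw [← Finsupp.sum_single f, Finsupp.sum, ← Finset.add_sum_erase _ _ h1]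
  · rw [Finsupp.notMem_support_iff.mp h1, Finsupp.single_zero, zero_add, hS,
      Finset.erase_eq_of_notMem h1]
    conv_rhs => rw [← Finsupp.sum_single f, Finsupp.sum]


theorem stmt_13 (M : ℕ) :
    (Pol M 0).ncard =
      {f : ℕ →₀ ℕ | (↑f.support ⊆ Tset) ∧ f.sum (fun t m => t * m) = M}.ncard := by
  have himg : gmap M '' (Pol M 0) =
      {f : ℕ →₀ ℕ | (↑f.support ⊆ Tset) ∧ f.sum (fun t m => t * m) = M} := by
    ext f
    constructor
    · rintro ⟨h, hh, rfl⟩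
      exact ⟨gmap_support M h, gmap_sum M h hh.1⟩
    · rintro ⟨hT, hsum⟩
      obtain ⟨h, hh, hgf⟩ := gmap_surj M f hT hsum
      exact ⟨h, hh, hgf⟩
  rw [← himg, Set.ncard_image_of_injOn (gmap_injOn M)]
end

section
/- In a finite graded poset satisfying the left-covering condition and possessing a unique minimal element, any two maximal chains can be connected by a finite discrete homotopy, i.e., a finite sequence of maximal chains in which consecutive chains differ at exactly one position. -/
/-- The left-covering condition: any two distinct elements covering a common element
have a common upper cover. -/
def LeftCovering (P : Type*) [PartialOrder P] : Prop :=
  ∀ z0 z1 z2 : P, z0 ⋖ z1 → z0 ⋖ z2 → z1 ≠ z2 → ∃ z3 : P, z1 ⋖ z3 ∧ z2 ⋖ z3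

/-- A maximal chain of length `n` in a poset with a least element: a saturated chain
starting at the bottom and ending at a maximal element. -/
structure MaxChain (P : Type*) [PartialOrder P] [OrderBot P] (n : ℕ) where
  toFun : Fin (n + 1) → P
  first : toFun 0 = ⊥
  step : ∀ i : Fin n, toFun i.castSucc ⋖ toFun i.succ
  last_max : IsMax (toFun (Fin.last n))

/-- Two maximal chains are adjacent if they differ at exactly one position. -/
def MaxChain.Adjacent {P : Type*} [PartialOrder P] [OrderBot P] {n : ℕ}
    (c c' : MaxChain P n) : Prop :=
  ∃! i : Fin (n + 1), c.toFun i ≠ c'.toFun i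

/-!
Induct downward on the length of the common initial segment of two maximal chains `F`, `F'`.
If they first differ at position `i + 1`, the left-covering condition gives `z` covering both
`F (i + 1)` and `F' (i + 1)`. Left covering also shows, by induction on the length, that from
any upper cover of `x` a maximal element is reached in exactly one covering step fewer than
from `x`; so both chains, cut after position `i + 1`, can be completed through `z` by a common
tail. The two completed chains are adjacent, and each shares with `F`, resp. `F'`, an initial
segment one position longer than the one `F` and `F'` share.
-/

open Relation

section ReachesMax

variable {P : Type*} [PartialOrder P]

def ReachesMaxIn (x : P) (k : ℕ) : Prop :=
  ∃ c : Fin (k + 1) → P, c 0 = x ∧ (∀ i : Fin k, c i.castSucc ⋖ c i.succ) ∧ IsMax (c (Fin.last k))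

theorem ReachesMaxIn.of_covBy (hlc : LeftCovering P) :
    ∀ {k : ℕ} {x y : P}, x ⋖ y → ReachesMaxIn x (k + 1) → ReachesMaxIn y k
  | k, _, y, hxy, ⟨c, hc0, hc, hmax⟩ => by
    subst hc0
    have htail : ReachesMaxIn (c 1) k := ⟨Fin.tail c, rfl, fun i => hc i.succ, hmax⟩
    by_cases hy : c 1 = y
    · exact hy ▸ htail
    obtain ⟨z, h1z, hyz⟩ := hlc _ _ _ (hc 0) hxy hy
    cases k with
    | zero => exact absurd hmax h1z.lt.not_isMax
    | succ k =>
      obtain ⟨e, rfl, he, hemax⟩ := of_covBy hlc h1z htail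
      refine ⟨Fin.cons y e, rfl, Fin.cases hyz fun i => ?_, hemax⟩
      simpa only [← Fin.succ_castSucc, Fin.cons_succ] using he i

end ReachesMax

namespace MaxChain

variable {P : Type*} [PartialOrder P] [OrderBot P] {n : ℕ}

instance : CoeFun (MaxChain P n) (fun _ => Fin (n + 1) → P) := ⟨MaxChain.toFun⟩

theorem ext {F G : MaxChain P n} (h : ∀ j, F j = G j) : F = G := by
  cases F; cases G; congr; funext j; exact h j

theorem Adjacent.symm {F G : MaxChain P n} : F.Adjacent G → G.Adjacent F
  | ⟨i, hi, hu⟩ => ⟨i, Ne.symm hi, fun j hj => hu j (Ne.symm hj)⟩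

instance : Std.Symm (Adjacent (P := P) (n := n)) :=
  ⟨fun _ _ => Adjacent.symm⟩

theorem reachesMaxIn (F : MaxChain P n) (j : Fin (n + 1)) : ReachesMaxIn (F j) (n - j) := by
  refine ⟨fun i => F ⟨j + i, by omega⟩, by simp, fun i => F.step ⟨j + i, by omega⟩, ?_⟩
  convert F.last_max using 2
  ext
  simp only [Fin.val_last]
  omega

def graft (F : MaxChain P n) (p : Fin (n + 1)) {k : ℕ} (c : Fin (k + 1) → P)
    (hk : p + k + 1 = n) (hp : F p ⋖ c 0) (hc : ∀ i : Fin k, c i.castSucc ⋖ c i.succ)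
    (hmax : IsMax (c (Fin.last k))) : MaxChain P n where
  toFun j := if j ≤ p then F j else c ⟨j - p - 1, by omega⟩
  first := by simp [F.first]
  step i := by
    split_ifs with h₁ h₂ h₂ <;>
      simp only [Fin.le_iff_val_le_val, Fin.val_succ, Fin.val_castSucc] at h₁ h₂
    · exact F.step i
    · obtain rfl : i.castSucc = p := Fin.ext (by simp only [Fin.val_castSucc]; omega)
      convert hp using 2
      ext
      simp only [Fin.val_succ, Fin.val_zero]
      omega
    · omega
    · convert hc ⟨i - p - 1, by omega⟩ using 2
      · rfl
      · ext
        simp only [Fin.val_succ]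
        omega
  last_max := by
    rw [if_neg (by simp only [Fin.le_iff_val_le_val, Fin.val_last]; omega)]
    convert hmax using 2
    ext
    simp only [Fin.val_last]
    omega

section graft

variable {F F' : MaxChain P n} {p : Fin (n + 1)} {k : ℕ} {c : Fin (k + 1) → P}
  {hk : p + k + 1 = n} {hc : ∀ i : Fin k, c i.castSucc ⋖ c i.succ} {hmax : IsMax (c (Fin.last k))}

theorem graft_apply_of_le (hp : F p ⋖ c 0) {j : Fin (n + 1)} (hj : j ≤ p) :
    F.graft p c hk hp hc hmax j = F j :=
  if_pos hj

theorem graft_apply_eq_of_lt (hp : F p ⋖ c 0) (hp' : F' p ⋖ c 0) {j : Fin (n + 1)} (hj : p < j) :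
    F.graft p c hk hp hc hmax j = F'.graft p c hk hp' hc hmax j := by
  simp only [graft, if_neg hj.not_ge]

theorem adjacent_graft (hp : F p ⋖ c 0) (hp' : F' p ⋖ c 0) (hF : Set.EqOn F F' (Set.Iio p))
    (hne : F p ≠ F' p) : (F.graft p c hk hp hc hmax).Adjacent (F'.graft p c hk hp' hc hmax) := by
  refine ⟨p, ?_, fun j hj => ?_⟩
  · dsimp only
    rwa [graft_apply_of_le _ le_rfl, graft_apply_of_le _ le_rfl]
  dsimp only at hj
  rcases lt_trichotomy j p with hjp | rfl | hpj
  · rw [graft_apply_of_le _ hjp.le, graft_apply_of_le _ hjp.le] at hj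
    exact absurd (hF hjp) hj
  · rfl
  · exact absurd (graft_apply_eq_of_lt hp hp' hpj) hj

end graft

theorem exists_adjacent_of_eqOn_Iic (hlc : LeftCovering P) {F F' : MaxChain P n} {i : Fin n}
    (hagree : Set.EqOn F F' (Set.Iic i.castSucc)) (hne : F i.succ ≠ F' i.succ) :
    ∃ G G' : MaxChain P n, Set.EqOn G F (Set.Iic i.succ) ∧ Set.EqOn G' F' (Set.Iic i.succ) ∧
      G.Adjacent G' := by
  have hF' : F i.castSucc ⋖ F' i.succ := hagree Set.self_mem_Iic ▸ F'.step i
  obtain ⟨z, hFz, hF'z⟩ := hlc _ _ _ (F.step i) hF' hne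
  have hlast : i.succ ≠ Fin.last n := fun h => hFz.lt.not_isMax (h ▸ F.last_max)
  have hlen : n - i.succ = n - i - 2 + 1 := by
    have := Fin.val_ne_iff.2 hlast
    simp only [Fin.val_succ, Fin.val_last] at this ⊢
    omega
  obtain ⟨c, hc0, hc, hmax⟩ := (hlen ▸ F.reachesMaxIn i.succ).of_covBy hlc hFz
  have hk : (i.succ : ℕ) + (n - i - 2) + 1 = n := by omega
  subst hc0
  exact ⟨F.graft i.succ c hk hFz hc hmax, F'.graft i.succ c hk hF'z hc hmax,
    fun j hj => graft_apply_of_le hFz hj, fun j hj => graft_apply_of_le hF'z hj,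
    adjacent_graft hFz hF'z (fun j hj => hagree (Fin.le_castSucc_iff.2 hj)) hne⟩

theorem reflTransGen_adjacent_of_eqOn_Iic (hlc : LeftCovering P) (k : Fin (n + 1)) :
    ∀ {F F' : MaxChain P n}, Set.EqOn F F' (Set.Iic k) → ReflTransGen Adjacent F F' := by
  induction k using Fin.reverseInduction with
  | last =>
    intro F F' h
    rw [ext fun j => h (Fin.le_last j)]
  | cast i ih =>
    intro F F' h
    by_cases hsucc : F i.succ = F' i.succ
    · refine ih fun j hj => ?_
      rcases (Set.mem_Iic.1 hj).eq_or_lt with rfl | hj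
      exacts [hsucc, h (Fin.le_castSucc_iff.2 hj)]
    obtain ⟨G, G', hG, hG', hGG'⟩ := exists_adjacent_of_eqOn_Iic hlc h hsucc
    exact (ih hG.symm).trans ((ReflTransGen.single hGG').trans (symm (ih hG'.symm)))

theorem reflTransGen_adjacent (hlc : LeftCovering P) (F F' : MaxChain P n) :
    ReflTransGen Adjacent F F' :=
  reflTransGen_adjacent_of_eqOn_Iic hlc 0 fun j hj => by
    rw [Fin.le_zero_iff.1 hj, F.first, F'.first]

end MaxChain

theorem RelSeries.exists_of_reflTransGen {α : Type*} {r : SetRel α α} {a b : α}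
    (h : ReflTransGen (fun x y => (x, y) ∈ r) a b) :
    ∃ s : RelSeries r, s.head = a ∧ s.last = b := by
  induction h with
  | refl => exact ⟨RelSeries.singleton r a, rfl, rfl⟩
  | tail _ hbc ih =>
    obtain ⟨s, rfl, rfl⟩ := ih
    exact ⟨s.snoc _ hbc, s.head_snoc _ hbc, s.last_snoc _ hbc⟩

theorem stmt_14_general {P : Type*} [PartialOrder P] [OrderBot P]
    (hlc : LeftCovering P) (n : ℕ) (F F' : MaxChain P n) :
    ∃ (m : ℕ) (g : Fin (m + 1) → MaxChain P n),
      g 0 = F ∧ g (Fin.last m) = F' ∧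
        ∀ i : Fin m, (g i.castSucc).Adjacent (g i.succ) := by
  obtain ⟨s, hs₀, hs⟩ :=
    RelSeries.exists_of_reflTransGen (r := {p : MaxChain P n × MaxChain P n | p.1.Adjacent p.2})
      (MaxChain.reflTransGen_adjacent hlc F F')
  exact ⟨s.length, s, hs₀, hs, s.step⟩

/-- In a finite graded poset with a unique minimal element satisfying the left-covering
condition, any two maximal chains are connected by a finite discrete homotopy. -/
theorem stmt_14 {P : Type*} [Fintype P] [PartialOrder P] [OrderBot P] [GradeOrder ℕ P]
    (hlc : LeftCovering P) (n : ℕ) (F F' : MaxChain P n) :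
    ∃ (m : ℕ) (g : Fin (m + 1) → MaxChain P n),
      g 0 = F ∧ g (Fin.last m) = F' ∧
        ∀ i : Fin m, (g i.castSucc).Adjacent (g i.succ) :=
  stmt_14_general hlc n F F'
end

section
/- For every n ≥ 0 there exists a connected simple graph with cycle rank n and exactly C_n edges; in particular C_1 = 3, C_2 = 5, C_3 = 6, C_4 = 8. -/
open SimpleGraph

lemma ck_eq (n m : ℕ) (hn : 1 ≤ n) (hm : 2 ≤ m)
    (h1 : (m - 1) * (m - 2) < 2 * n) (h2 : 2 * n ≤ m * (m - 1)) : Ck n = n + m := by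
  have hn0 : n ≠ 0 := by omega
  rw [Ck, if_neg hn0]
  set s := Real.sqrt (8 * (n : ℝ) - 7) with hs
  have h7 : (0 : ℝ) ≤ 8 * (n : ℝ) - 7 := by
    have : (1 : ℝ) ≤ (n : ℝ) := by exact_mod_cast hn
    linarith
  have hsnn : 0 ≤ s := Real.sqrt_nonneg _
  have hssq : s ^ 2 = 8 * (n : ℝ) - 7 := Real.sq_sqrt h7
  -- even product
  obtain ⟨j, rfl⟩ : ∃ j, m = j + 2 := ⟨m - 2, by omega⟩
  have e1 : j + 2 - 1 = j + 1 := by omega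
  have e2 : j + 2 - 2 = j := by omega
  simp only [e1, e2] at h1 h2
  have heven : Even ((j + 1) * j) := by
    rw [Nat.mul_comm]
    exact Nat.even_mul_succ_self j
  obtain ⟨k, hk⟩ := heven
  have h1' : (j + 1) * j + 2 ≤ 2 * n := by omega
  -- lower bound: 2m - 3 ≤ s
  have hlow : 2 * ((j : ℝ) + 2) - 3 ≤ s := by
    have h1r : ((j : ℝ) + 1) * j + 2 ≤ 2 * n := by exact_mod_cast h1'
    nlinarith [hssq, hsnn, sq_nonneg (s - (2 * ((j : ℝ) + 2) - 3))]
  -- upper bound: s < 2m - 1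
  have hup : s < 2 * ((j : ℝ) + 2) - 1 := by
    have h2r : 2 * (n : ℝ) ≤ ((j : ℝ) + 2) * ((j : ℝ) + 1) := by exact_mod_cast h2
    nlinarith [hssq, hsnn]
  rw [Nat.floor_eq_iff (by positivity)]
  constructor
  · push_cast
    linarith
  · push_cast
    linarith

lemma main_graph (n m : ℕ) (hm : 2 ≤ m) (hnm : n ≤ (⊤ : SimpleGraph (Fin m)).edgeFinset.card) :
    ∃ (G : SimpleGraph (Fin (m + 1))) (_ : Fintype G.edgeSet),
      G.Connected ∧ G.edgeFinset.card = n + m := by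
  classical
  obtain ⟨T1, hT1sub, hT1card⟩ := Finset.exists_subset_card_eq hnm
  set chosen : Finset (Sym2 (Fin (m + 1))) := T1.image (Sym2.map Fin.succ) with hchosen
  set star : Finset (Sym2 (Fin (m + 1))) :=
    (Finset.univ : Finset (Fin m)).image (fun a => s(0, a.succ)) with hstar
  have hchosenProp : ∀ e ∈ chosen, ¬ e.IsDiag ∧ (0 : Fin (m + 1)) ∉ e := by
    intro e he
    rw [hchosen, Finset.mem_image] at he
    obtain ⟨e', he', rfl⟩ := he
    have he'' := hT1sub he'
    rw [SimpleGraph.mem_edgeFinset] at he''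
    induction e' using Sym2.ind with
    | _ a b =>
      have hab : a ≠ b := he''
      refine ⟨?_, ?_⟩
      · simp only [Sym2.map_pair_eq, Sym2.isDiag_iff_proj_eq]
        exact fun h => hab (Fin.succ_injective _ h)
      · simp only [Sym2.map_pair_eq, Sym2.mem_iff]
        push_neg
        exact ⟨(Fin.succ_ne_zero a).symm, (Fin.succ_ne_zero b).symm⟩
  have hstarProp : ∀ e ∈ star, ¬ e.IsDiag ∧ (0 : Fin (m + 1)) ∈ e := by
    intro e he
    rw [hstar, Finset.mem_image] at he
    obtain ⟨a, _, rfl⟩ := he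
    refine ⟨?_, ?_⟩
    · simp only [Sym2.isDiag_iff_proj_eq]
      exact fun h => (Fin.succ_ne_zero a) h.symm
    · simp
  have hdisj : Disjoint star chosen := by
    rw [Finset.disjoint_left]
    intro e he hec
    exact (hchosenProp e hec).2 (hstarProp e he).2
  set S : Finset (Sym2 (Fin (m + 1))) := star ∪ chosen with hS
  have hScard : S.card = m + n := by
    rw [hS, Finset.card_union_of_disjoint hdisj]
    have h1 : star.card = m := by
      rw [hstar, Finset.card_image_of_injective _ ?_, Finset.card_univ, Fintype.card_fin]
      intro x y hxy
      simp only [Sym2.congr_right] at hxy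
      exact Fin.succ_injective _ hxy
    have h2 : chosen.card = n := by
      rw [hchosen, Finset.card_image_of_injective _
        (Sym2.map.injective (Fin.succ_injective _)), hT1card]
    rw [h1, h2]
  set G := SimpleGraph.fromEdgeSet (↑S : Set (Sym2 (Fin (m + 1)))) with hG
  have hSnondiag : ∀ e ∈ S, ¬ e.IsDiag := by
    intro e he
    rw [hS, Finset.mem_union] at he
    rcases he with h | h
    · exact (hstarProp e h).1
    · exact (hchosenProp e h).1
  have hEdge : G.edgeSet = ↑S := by
    rw [hG, SimpleGraph.edgeSet_fromEdgeSet]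
    ext e
    simp only [Set.mem_diff, Finset.mem_coe, Set.mem_setOf_eq]
    exact ⟨fun h => h.1, fun h => ⟨h, hSnondiag e h⟩⟩
  have hfin : G.edgeSet.Finite := hEdge ▸ S.finite_toSet
  letI : Fintype G.edgeSet := hfin.fintype
  refine ⟨G, inferInstance, ?_, ?_⟩
  · -- Connected
    have hadj : ∀ b : Fin (m + 1), b ≠ 0 → G.Adj 0 b := by
      intro b hb
      obtain ⟨a, rfl⟩ := Fin.exists_succ_eq.2 hb
      rw [hG, SimpleGraph.fromEdgeSet_adj]
      refine ⟨?_, (Fin.succ_ne_zero a).symm⟩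
      rw [Finset.mem_coe, hS, Finset.mem_union]
      exact Or.inl (Finset.mem_image_of_mem _ (Finset.mem_univ a))
    constructor
    · intro a b
      by_cases ha : a = 0
      · by_cases hb : b = 0
        · rw [ha, hb]
        · exact ha ▸ (hadj b hb).reachable
      · by_cases hb : b = 0
        · exact hb ▸ (hadj a ha).symm.reachable
        · exact ((hadj a ha).symm.reachable).trans (hadj b hb).reachable
  · -- edge count
    have hEF : G.edgeFinset = S := by
      ext e
      rw [SimpleGraph.mem_edgeFinset, hEdge, Finset.mem_coe]
    rw [hEF, hScard, Nat.add_comm]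

lemma exists_m (n : ℕ) (hn : 1 ≤ n) :
    ∃ m : ℕ, 2 ≤ m ∧ 2 * n ≤ m * (m - 1) ∧ (m - 1) * (m - 2) < 2 * n := by
  classical
  have hex : ∃ m : ℕ, 2 ≤ m ∧ 2 * n ≤ m * (m - 1) := by
    refine ⟨2 * n, by omega, ?_⟩
    have h1 : 1 ≤ 2 * n - 1 := by omega
    calc 2 * n = 2 * n * 1 := by ring
    _ ≤ 2 * n * (2 * n - 1) := Nat.mul_le_mul_left _ h1
  set m := Nat.find hex with hm
  have hspec := Nat.find_spec hex
  refine ⟨m, hspec.1, hspec.2, ?_⟩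
  by_cases h3 : m = 2
  · rw [h3]
    simpa using by omega
  · have hm3 : 3 ≤ m := by omega
    have hmin := Nat.find_min hex (show m - 1 < m by omega)
    push_neg at hmin
    have := hmin (by omega)
    have heq : (m - 1) - 1 = m - 2 := by omega
    rw [heq] at this
    omega

theorem stmt_18 :
    (∀ n : ℕ, ∃ (N : ℕ) (G : SimpleGraph (Fin N)) (_ : Fintype G.edgeSet),
        G.Connected ∧ G.edgeFinset.card = Ck n ∧ G.edgeFinset.card + 1 = N + n) ∧
      Ck 1 = 3 ∧ Ck 2 = 5 ∧ Ck 3 = 6 ∧ Ck 4 = 8 := by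
  classical
  refine ⟨?_, ?_, ?_, ?_, ?_⟩
  · intro n
    rcases Nat.eq_zero_or_pos n with rfl | hn
    · letI : Fintype (⊥ : SimpleGraph (Fin 1)).edgeSet :=
        (SimpleGraph.edgeSet_bot (V := Fin 1) ▸ Set.finite_empty).fintype
      refine ⟨1, ⊥, inferInstance, ?_, ?_, ?_⟩
      · constructor
        intro a b
        have : a = b := Subsingleton.elim a b
        rw [this]
      · have h0 : (⊥ : SimpleGraph (Fin 1)).edgeFinset = ∅ := by
          ext e
          simp [SimpleGraph.mem_edgeFinset]
        rw [h0, Ck]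
        simp
      · have h0 : (⊥ : SimpleGraph (Fin 1)).edgeFinset = ∅ := by
          ext e
          simp [SimpleGraph.mem_edgeFinset]
        rw [h0]
        simp
    · obtain ⟨m, hm2, hub, hlb⟩ := exists_m n hn
      have hck : Ck n = n + m := ck_eq n m hn hm2 hlb hub
      have hcard : n ≤ (⊤ : SimpleGraph (Fin m)).edgeFinset.card := by
        rw [SimpleGraph.card_edgeFinset_top_eq_card_choose_two, Fintype.card_fin,
          Nat.choose_two_right]
        rw [Nat.le_div_iff_mul_le (by norm_num)]
        omega
      obtain ⟨G, hfin, hconn, hcardG⟩ := main_graph n m hm2 hcard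
      exact ⟨m + 1, G, hfin, hconn, by rw [hcardG, hck], by rw [hcardG]; omega⟩
  · rw [ck_eq 1 2 (by norm_num) (by norm_num) (by norm_num) (by norm_num)]
  · rw [ck_eq 2 3 (by norm_num) (by norm_num) (by norm_num) (by norm_num)]
  · rw [ck_eq 3 3 (by norm_num) (by norm_num) (by norm_num) (by norm_num)]
  · rw [ck_eq 4 4 (by norm_num) (by norm_num) (by norm_num) (by norm_num)]
end
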